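/- There exist a real number α > 0 and a natural number k₀ such that for every a ∈ ℝ² lying in the interior of the first quadrant or the interior of the third quadrant, and every integer k ≥ k₀, N_k(Σ₁, a) ≤ α·k², where Σ₁ = {A₁, A₂}. -/

import Mathlib

open Matrix Set

noncomputable section

/-- `XSeq S a k` is the set of all vectors `T_{k-1} ⋯ T_0 · a` with each `T_j ∈ S`
(and `XSeq S a 0 = {a}`). -/
def XSeq {n : ℕ} (S : Set (Matrix (Fin n) (Fin n) ℝ)) (a : Fin n → ℝ) : ℕ → Set (Fin n → ℝ)
  | 0 => {a}
  | k + 1 => ⋃ A ∈ S, A.mulVec '' XSeq S a k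

/-- `PHull S a k` is the convex hull of `XSeq S a k`. -/
def PHull {n : ℕ} (S : Set (Matrix (Fin n) (Fin n) ℝ)) (a : Fin n → ℝ) (k : ℕ) :
    Set (Fin n → ℝ) :=
  convexHull ℝ (XSeq S a k)

/-- `EPts S a k` is the set of extreme points of `PHull S a k`. -/
def EPts {n : ℕ} (S : Set (Matrix (Fin n) (Fin n) ℝ)) (a : Fin n → ℝ) (k : ℕ) :
    Set (Fin n → ℝ) :=
  Set.extremePoints ℝ (PHull S a k)

/-- `NExt S a k` is the number of extreme points of `PHull S a k`. -/
def NExt {n : ℕ} (S : Set (Matrix (Fin n) (Fin n) ℝ)) (a : Fin n → ℝ) (k : ℕ) : ℕ :=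
  (EPts S a k).ncard

def M1 : Matrix (Fin 2) (Fin 2) ℝ := !![0, 1; 1, 0]
def M2 : Matrix (Fin 2) (Fin 2) ℝ := !![1, 1; 0, 1]
def M3 : Matrix (Fin 2) (Fin 2) ℝ := !![1, 0; 1, 1]
def M4 : Matrix (Fin 2) (Fin 2) ℝ := !![1, 1; 1, 0]
def M5 : Matrix (Fin 2) (Fin 2) ℝ := !![0, 1; 1, 1]

/-- Interior of the first quadrant. -/
def intQ1 : Set (Fin 2 → ℝ) := {c | 0 < c 0 ∧ 0 < c 1}
/-- Interior of the second quadrant. -/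
def intQ2 : Set (Fin 2 → ℝ) := {c | c 0 < 0 ∧ 0 < c 1}
/-- Interior of the third quadrant. -/
def intQ3 : Set (Fin 2 → ℝ) := {c | c 0 < 0 ∧ c 1 < 0}
/-- Interior of the fourth quadrant. -/
def intQ4 : Set (Fin 2 → ℝ) := {c | 0 < c 0 ∧ c 1 < 0}

/-!
For `a` in the open first quadrant all of `X_k` stays in that quadrant. An extreme point of `P_k`
is the unique maximiser on `X_k` of some nonzero functional `c`, and a maximiser at level `k + 2`
is `A q` for `A ∈ Σ₁`, where `q` maximises `c A` at level `k + 1`; positivity rules out one of the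
two branches for most `c`. Sorting extreme points by the quadrant of `c`: the open first quadrant
contributes `O(k)` (it is fed by its steep half through `A₂` and its flat half through `A₁`, which
share at most the maximiser of `(1, 1)`), the south-east `O(k²)` (it is fed by itself and the first
quadrant), the south-west at most three (its maximisers are minimal points, and every point of
`X_k` dominates one of three fixed points), and the north-west reduces through `A₁` to the previous
two. The third quadrant follows from `X_k(-a) = -X_k(a)`.
-/

section StrictMax

variable {α β : Type*}

def IsStrictMaxOn [LT β] (φ : α → β) (s : Set α) (p : α) : Prop :=
  p ∈ s ∧ ∀ q ∈ s, q ≠ p → φ q < φ p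

variable [LinearOrder β] {φ : α → β} {s t : Set α} {p q : α}

theorem IsStrictMaxOn.eq_of_le (h : IsStrictMaxOn φ s p) (hq : q ∈ s) (hle : φ p ≤ φ q) :
    q = p := by
  by_contra hne
  exact (h.2 q hq hne).not_ge hle

theorem IsStrictMaxOn.not_lt (h : IsStrictMaxOn φ s p) (hq : q ∈ s) : ¬φ p < φ q := fun hlt ↦
  hlt.ne (congrArg φ (h.eq_of_le hq hlt.le)).symm

theorem IsStrictMaxOn.unique (h : IsStrictMaxOn φ s p) (h' : IsStrictMaxOn φ s q) : p = q :=
  (h.eq_of_le h'.1 (_root_.not_lt.1 (h'.not_lt h.1))).symm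

theorem IsStrictMaxOn.of_comp {f : α → α} (hf : f.Injective) (hst : f '' s ⊆ t) (hq : q ∈ s)
    (h : IsStrictMaxOn φ t (f q)) : IsStrictMaxOn (φ ∘ f) s q :=
  ⟨hq, fun _ hq' hne ↦ h.2 _ (hst (mem_image_of_mem f hq')) (hf.ne hne)⟩

end StrictMax

section Maximizers

variable {ι : Type*} [Fintype ι]

def maximizers (D s : Set (ι → ℝ)) : Set (ι → ℝ) :=
  {p | ∃ c ∈ D, IsStrictMaxOn (c ⬝ᵥ ·) s p}

variable {D D' s t : Set (ι → ℝ)}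

theorem maximizers_subset : maximizers D s ⊆ s := fun _ ⟨_, _, h⟩ ↦ h.1

theorem maximizers_mono (h : D ⊆ D') : maximizers D s ⊆ maximizers D' s :=
  fun _ ⟨c, hc, hp⟩ ↦ ⟨c, h hc, hp⟩

theorem maximizers_union : maximizers (D ∪ D') s = maximizers D s ∪ maximizers D' s := by
  ext p
  simp [maximizers, or_and_right, exists_or]

theorem IsStrictMaxOn.vecMul {M : Matrix ι ι ℝ} (hM : Function.Injective M.mulVec)
    (hst : M.mulVec '' s ⊆ t) {c q : ι → ℝ} (hq : q ∈ s) (h : IsStrictMaxOn (c ⬝ᵥ ·) t (M *ᵥ q)) :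
    IsStrictMaxOn ((c ᵥ* M) ⬝ᵥ ·) s q := by
  simpa only [Function.comp_def, dotProduct_mulVec] using h.of_comp hM hst hq

theorem maximizers_subset_image {M : Matrix ι ι ℝ} (hM : Function.Injective M.mulVec)
    (hst : M.mulVec '' s ⊆ t) (hD : ∀ c ∈ D, c ᵥ* M ∈ D')
    (himage : ∀ c ∈ D, ∀ p, IsStrictMaxOn (c ⬝ᵥ ·) t p → p ∈ M.mulVec '' s) :
    maximizers D t ⊆ M.mulVec '' maximizers D' s := by
  rintro p ⟨c, hc, hp⟩
  obtain ⟨q, hq, rfl⟩ := himage c hc p hp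
  exact ⟨q, ⟨c ᵥ* M, hD c hc, hp.vecMul hM hst hq⟩, rfl⟩

variable [DecidableEq ι]

theorem extremePoints_convexHull_subset_maximizers (hs : s.Finite) (hnt : s.Nontrivial) :
    extremePoints ℝ (convexHull ℝ s) ⊆ maximizers {c | c ≠ 0} s := by
  intro p hp
  have hps : p ∈ s := extremePoints_convexHull_subset hp
  have hsep : p ∉ convexHull ℝ (s \ {p}) := fun hmem ↦
    ((convex_convexHull ℝ s).mem_extremePoints_iff_mem_sdiff_convexHull_sdiff.1 hp).2
      (convexHull_mono (sdiff_subset_sdiff_left (subset_convexHull ℝ s)) hmem)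
  obtain ⟨f, u, hfu, hup⟩ := geometric_hahn_banach_closed_point (convex_convexHull ℝ _)
    (hs.sdiff.isClosed_convexHull (𝕜 := ℝ)) hsep
  set c := (dotProductEquiv ℝ ι).symm f.toLinearMap
  have hc : ∀ q, c ⬝ᵥ q = f q := fun q ↦
    LinearMap.congr_fun ((dotProductEquiv ℝ ι).apply_symm_apply f.toLinearMap) q
  have hmax : IsStrictMaxOn (c ⬝ᵥ ·) s p := ⟨hps, fun q hq hne ↦ by
    simpa only [hc] using (hfu q (subset_convexHull ℝ _ ⟨hq, hne⟩)).trans hup⟩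
  refine ⟨c, fun hc0 ↦ ?_, hmax⟩
  obtain ⟨q, hq, hne⟩ := hnt.exists_ne p
  simpa [hc0] using hmax.2 q hq hne

end Maximizers

theorem ncard_le_add_of_subset_image_union {α β : Type*} {f g : α → β} {s : Set β}
    {t u : Set α} (ht : t.Finite) (hu : u.Finite) (h : s ⊆ f '' t ∪ g '' u) :
    s.ncard ≤ t.ncard + u.ncard :=
  (ncard_le_ncard h ((ht.image f).union (hu.image g))).trans
    ((ncard_union_le _ _).trans (add_le_add (ncard_image_le ht) (ncard_image_le hu)))

theorem Matrix.monotone_mulVec {ι : Type*} [Fintype ι] {M : Matrix ι ι ℝ}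
    (hM : ∀ i j, 0 ≤ M i j) : Monotone M.mulVec := fun _ _ h i ↦
  Finset.sum_le_sum fun j _ ↦ mul_le_mul_of_nonneg_left (h j) (hM i j)

theorem le_iff_fin_two {u v : Fin 2 → ℝ} : u ≤ v ↔ u 0 ≤ v 0 ∧ u 1 ≤ v 1 :=
  Pi.le_def.trans Fin.forall_fin_two

section XSeq

open scoped Pointwise

variable {n : ℕ} {S : Set (Matrix (Fin n) (Fin n) ℝ)} {a : Fin n → ℝ}

theorem mulVec_mem_XSeq {A : Matrix (Fin n) (Fin n) ℝ} (hA : A ∈ S) {k : ℕ} {q : Fin n → ℝ}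
    (hq : q ∈ XSeq S a k) : A *ᵥ q ∈ XSeq S a (k + 1) :=
  mem_biUnion hA (mem_image_of_mem _ hq)

theorem XSeq_pair_succ (A B : Matrix (Fin n) (Fin n) ℝ) (a : Fin n → ℝ) (k : ℕ) :
    XSeq {A, B} a (k + 1) = A.mulVec '' XSeq {A, B} a k ∪ B.mulVec '' XSeq {A, B} a k := by
  simp [XSeq]

theorem XSeq_finite (hS : S.Finite) (a : Fin n → ℝ) (k : ℕ) : (XSeq S a k).Finite := by
  induction k with
  | zero => exact finite_singleton a
  | succ k ih => exact hS.biUnion fun _ _ ↦ ih.image _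

theorem ncard_XSeq_pair_le (A B : Matrix (Fin n) (Fin n) ℝ) (a : Fin n → ℝ) (k : ℕ) :
    (XSeq {A, B} a k).ncard ≤ 2 ^ k := by
  induction k with
  | zero => simp [XSeq]
  | succ k ih =>
    have hfin := XSeq_finite (toFinite {A, B}) a k
    rw [XSeq_pair_succ, pow_succ]
    calc _ ≤ (A.mulVec '' XSeq {A, B} a k).ncard + (B.mulVec '' XSeq {A, B} a k).ncard :=
          ncard_union_le _ _
      _ ≤ 2 ^ k + 2 ^ k := add_le_add ((ncard_image_le hfin).trans ih) ((ncard_image_le hfin).trans ih)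
      _ = 2 ^ k * 2 := by ring

theorem XSeq_smul (S : Set (Matrix (Fin n) (Fin n) ℝ)) (t : ℝ) (a : Fin n → ℝ) (k : ℕ) :
    XSeq S (t • a) k = t • XSeq S a k := by
  induction k with
  | zero => simp [XSeq]
  | succ k ih =>
    simp only [XSeq, ih, ← image_smul, image_iUnion₂, image_image, mulVec_smul]

theorem NExt_smul (S : Set (Matrix (Fin n) (Fin n) ℝ)) {t : ℝ} (ht : t ≠ 0) (a : Fin n → ℝ)
    (k : ℕ) : NExt S (t • a) k = NExt S a k := by
  have hext : extremePoints ℝ ((t • ·) '' convexHull ℝ (XSeq S a k)) =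
      (t • ·) '' extremePoints ℝ (convexHull ℝ (XSeq S a k)) :=
    (image_extremePoints (LinearEquiv.smulOfNeZero ℝ (Fin n → ℝ) t ht) _).symm
  rw [NExt, EPts, PHull, XSeq_smul, convexHull_smul, ← image_smul, hext]
  exact ncard_image_of_injective _ (smul_right_injective _ ht)

end XSeq

section Cones

def steep : Set (Fin 2 → ℝ) := {c | 0 < c 0 ∧ c 0 < c 1}
def flat : Set (Fin 2 → ℝ) := {c | 0 < c 1 ∧ c 1 < c 0}
def southEast : Set (Fin 2 → ℝ) := {c | 0 < c 0 ∧ c 1 ≤ 0}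
def southWest : Set (Fin 2 → ℝ) := {c | c 0 ≤ 0 ∧ c 1 < 0}
def northWest : Set (Fin 2 → ℝ) := {c | c 0 ≤ 0 ∧ 0 ≤ c 1 ∧ (c 0 < 0 ∨ 0 < c 1)}

theorem steep_subset_intQ1 : steep ⊆ intQ1 := fun _ ⟨h0, h1⟩ ↦ ⟨h0, h0.trans h1⟩

theorem flat_subset_intQ1 : flat ⊆ intQ1 := fun _ ⟨h1, h0⟩ ↦ ⟨h1.trans h0, h1⟩

theorem ne_zero_subset_cones :
    {c : Fin 2 → ℝ | c ≠ 0} ⊆ intQ1 ∪ southEast ∪ southWest ∪ northWest := by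
  intro c hc
  have hc' : c 0 ≠ 0 ∨ c 1 ≠ 0 := by
    by_contra! h
    exact hc (by ext i; fin_cases i <;> simp [h])
  simp only [mem_union, intQ1, southEast, southWest, northWest, mem_ofPred_eq]
  rcases lt_or_ge 0 (c 0) with h0 | h0
  · rcases lt_or_ge 0 (c 1) with h1 | h1
    · exact Or.inl (Or.inl (Or.inl ⟨h0, h1⟩))
    · exact Or.inl (Or.inl (Or.inr ⟨h0, h1⟩))
  · rcases lt_or_ge (c 1) 0 with h1 | h1
    · exact Or.inl (Or.inr ⟨h0, h1⟩)
    · refine Or.inr ⟨h0, h1, hc'.imp (lt_of_le_of_ne h0) (fun h ↦ lt_of_le_of_ne h1 h.symm)⟩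

theorem subsingleton_maximizers_steep_inter_flat (s : Set (Fin 2 → ℝ)) :
    (maximizers steep s ∩ maximizers flat s).Subsingleton := by
  have hdiag : ∀ p ∈ maximizers steep s ∩ maximizers flat s, IsStrictMaxOn (![1, 1] ⬝ᵥ ·) s p := by
    rintro p ⟨⟨c, ⟨hc0, hc⟩, hcp⟩, ⟨e, ⟨he1, he⟩, hep⟩⟩
    refine ⟨hcp.1, fun q hq hne ↦ ?_⟩
    have h1 := hcp.2 q hq hne
    have h2 := hep.2 q hq hne
    simp only [vec2_dotProduct, cons_val_zero, cons_val_one, one_mul] at h1 h2 ⊢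
    -- `(e₀ - e₁) c + (c₁ - c₀) e` is a positive multiple of `(1, 1)`.
    have hw : 0 < c 1 * e 0 - c 0 * e 1 := by nlinarith
    have hcomb : (c 1 * e 0 - c 0 * e 1) * (p 0 + p 1 - (q 0 + q 1)) =
        (e 0 - e 1) * (c 0 * p 0 + c 1 * p 1 - (c 0 * q 0 + c 1 * q 1)) +
          (c 1 - c 0) * (e 0 * p 0 + e 1 * p 1 - (e 0 * q 0 + e 1 * q 1)) := by ring
    have hpos : 0 < (c 1 * e 0 - c 0 * e 1) * (p 0 + p 1 - (q 0 + q 1)) := hcomb ▸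
      add_pos (mul_pos (sub_pos.2 he) (sub_pos.2 h1)) (mul_pos (sub_pos.2 hc) (sub_pos.2 h2))
    linarith [pos_of_mul_pos_right hpos hw.le]
  exact fun p hp q hq ↦ (hdiag p hp).unique (hdiag q hq)

end Cones

section SwapShear

local notation "𝒳" => XSeq (insert M1 (singleton M2))

variable {a c p q : Fin 2 → ℝ} {k : ℕ}

theorem M1_mulVec (u : Fin 2 → ℝ) : M1 *ᵥ u = ![u 1, u 0] := by
  ext i; fin_cases i <;> simp [M1, vecHead, vecTail]

theorem M2_mulVec (u : Fin 2 → ℝ) : M2 *ᵥ u = ![u 0 + u 1, u 1] := by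
  ext i; fin_cases i <;> simp [M2, vecHead, vecTail]

theorem vecMul_M1 (c : Fin 2 → ℝ) : c ᵥ* M1 = ![c 1, c 0] := by
  ext i; fin_cases i <;> simp [M1, vecHead, vecTail]

theorem vecMul_M2 (c : Fin 2 → ℝ) : c ᵥ* M2 = ![c 0, c 0 + c 1] := by
  ext i; fin_cases i <;> simp [M2, vecHead, vecTail]

theorem M1_mulVec_involutive : Function.Involutive M1.mulVec := fun u ↦ by
  ext i; fin_cases i <;> simp only [M1_mulVec, cons_val_zero, cons_val_one] <;> rfl

theorem M2_mulVec_injective : Function.Injective M2.mulVec := fun u v h ↦ by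
  obtain ⟨h0, h1, -⟩ := by simpa only [M2_mulVec, vecCons_inj] using h
  ext i; fin_cases i
  · show u 0 = v 0; linarith
  · exact h1

theorem monotone_M1_mulVec : Monotone M1.mulVec :=
  Matrix.monotone_mulVec fun i j ↦ by fin_cases i <;> fin_cases j <;> simp [M1]

theorem monotone_M2_mulVec : Monotone M2.mulVec :=
  Matrix.monotone_mulVec fun i j ↦ by fin_cases i <;> fin_cases j <;> simp [M2]

theorem mapsTo_M1_mulVec_intQ1 : MapsTo M1.mulVec intQ1 intQ1 := fun u ⟨hu0, hu1⟩ ↦ by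
  rw [M1_mulVec]
  exact ⟨hu1, hu0⟩

theorem mapsTo_M2_mulVec_intQ1 : MapsTo M2.mulVec intQ1 intQ1 := fun u ⟨hu0, hu1⟩ ↦ by
  rw [M2_mulVec]
  exact ⟨add_pos hu0 hu1, hu1⟩

theorem X_succ (a : Fin 2 → ℝ) (k : ℕ) :
    𝒳 a (k + 1) = M1.mulVec '' 𝒳 a k ∪ M2.mulVec '' 𝒳 a k :=
  XSeq_pair_succ M1 M2 a k

theorem M1_mulVec_mem_X (hq : q ∈ 𝒳 a k) : M1 *ᵥ q ∈ 𝒳 a (k + 1) :=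
  mulVec_mem_XSeq (S := {M1, M2}) (mem_insert M1 {M2}) hq

theorem M2_mulVec_mem_X (hq : q ∈ 𝒳 a k) : M2 *ᵥ q ∈ 𝒳 a (k + 1) :=
  mulVec_mem_XSeq (S := {M1, M2}) (mem_insert_of_mem M1 rfl) hq

theorem mem_X_add_two (hq : q ∈ 𝒳 a k) : q ∈ 𝒳 a (k + 2) := by
  have h := M1_mulVec_mem_X (M1_mulVec_mem_X hq)
  rwa [M1_mulVec_involutive] at h

theorem X_finite (a : Fin 2 → ℝ) (k : ℕ) : (𝒳 a k).Finite :=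
  XSeq_finite (toFinite _) a k

theorem X_subset_intQ1 (ha : a ∈ intQ1) (k : ℕ) : 𝒳 a k ⊆ intQ1 := by
  induction k with
  | zero => simpa [XSeq] using ha
  | succ k ih =>
    rw [X_succ, union_subset_iff]
    exact ⟨(mapsTo_M1_mulVec_intQ1.mono_left ih).image_subset,
      (mapsTo_M2_mulVec_intQ1.mono_left ih).image_subset⟩

theorem mem_M2_image_of_isStrictMaxOn (ha : a ∈ intQ1) (hc0 : 0 < c 0) (hc : c 1 ≤ c 0)
    (hp : IsStrictMaxOn (c ⬝ᵥ ·) (𝒳 a (k + 2)) p) : p ∈ M2.mulVec '' 𝒳 a (k + 1) := by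
  have hpX := hp.1
  rw [X_succ] at hpX
  rcases hpX with ⟨q, hq, rfl⟩ | hT
  · exfalso
    rw [X_succ] at hq
    -- `M2 *ᵥ M2 *ᵥ r` beats both `M1 *ᵥ M1 *ᵥ r = r` and `M1 *ᵥ M2 *ᵥ r`.
    obtain ⟨r, hr, rfl⟩ | ⟨r, hr, rfl⟩ := hq <;>
    · refine hp.not_lt (M2_mulVec_mem_X (M2_mulVec_mem_X hr)) ?_
      obtain ⟨hr0, hr1⟩ := X_subset_intQ1 ha k hr
      simp only [M1_mulVec, M2_mulVec, vec2_dotProduct, cons_val_zero, cons_val_one]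
      nlinarith
  · exact hT

theorem mem_M1_image_of_isStrictMaxOn (ha : a ∈ intQ1) (hc : c ∈ northWest)
    (hp : IsStrictMaxOn (c ⬝ᵥ ·) (𝒳 a (k + 2)) p) : p ∈ M1.mulVec '' 𝒳 a (k + 1) := by
  obtain ⟨hc0, hc1, hc⟩ := hc
  have hpX := hp.1
  rw [X_succ] at hpX
  rcases hpX with hS | ⟨q, hq, rfl⟩
  · exact hS
  exfalso
  rw [X_succ] at hq
  -- `M1 *ᵥ M2 *ᵥ r` beats `M2 *ᵥ M1 *ᵥ r`, and `r = M1 *ᵥ M1 *ᵥ r` beats `M2 *ᵥ M2 *ᵥ r`.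
  obtain ⟨r, hr, rfl⟩ | ⟨r, hr, rfl⟩ := hq <;> obtain ⟨hr0, hr1⟩ := X_subset_intQ1 ha k hr
  · refine hp.not_lt (M1_mulVec_mem_X (M2_mulVec_mem_X hr)) ?_
    simp only [M1_mulVec, M2_mulVec, vec2_dotProduct, cons_val_zero, cons_val_one]
    rcases hc with hc | hc <;> nlinarith
  · have heq := hp.eq_of_le (mem_X_add_two hr) (by
      simp only [M2_mulVec, vec2_dotProduct, cons_val_zero, cons_val_one]
      nlinarith)
    have h0 := congrFun heq 0
    simp only [M2_mulVec, cons_val_zero, cons_val_one] at h0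
    linarith

theorem M1_image_X_subset (a : Fin 2 → ℝ) (k : ℕ) : M1.mulVec '' 𝒳 a k ⊆ 𝒳 a (k + 1) :=
  X_succ a k ▸ subset_union_left

theorem M2_image_X_subset (a : Fin 2 → ℝ) (k : ℕ) : M2.mulVec '' 𝒳 a k ⊆ 𝒳 a (k + 1) :=
  X_succ a k ▸ subset_union_right

theorem maximizers_intQ1_subset (ha : a ∈ intQ1) (k : ℕ) :
    maximizers intQ1 (𝒳 a (k + 2)) ⊆
      M2.mulVec '' maximizers steep (𝒳 a (k + 1)) ∪ M1.mulVec '' maximizers flat (𝒳 a (k + 1)) := by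
  rintro p ⟨c, ⟨hc0, hc1⟩, hp⟩
  have hsteep : c ᵥ* M2 ∈ steep := by simp [steep, vecMul_M2, hc0, hc1]
  by_cases hc : c 1 ≤ c 0
  · obtain ⟨q, hq, rfl⟩ := mem_M2_image_of_isStrictMaxOn ha hc0 hc hp
    exact Or.inl ⟨q, ⟨_, hsteep, hp.vecMul M2_mulVec_injective (M2_image_X_subset a _) hq⟩, rfl⟩
  · have hpX := hp.1
    rw [X_succ] at hpX
    rcases hpX with ⟨q, hq, rfl⟩ | ⟨q, hq, rfl⟩
    · have hflat : c ᵥ* M1 ∈ flat := by simp [flat, vecMul_M1, hc0, not_le.1 hc]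
      exact Or.inr ⟨q, ⟨_, hflat, hp.vecMul M1_mulVec_involutive.injective
        (M1_image_X_subset a _) hq⟩, rfl⟩
    · exact Or.inl ⟨q, ⟨_, hsteep, hp.vecMul M2_mulVec_injective (M2_image_X_subset a _) hq⟩, rfl⟩

theorem maximizers_southEast_subset (ha : a ∈ intQ1) (k : ℕ) :
    maximizers southEast (𝒳 a (k + 2)) ⊆
      M2.mulVec '' maximizers (southEast ∪ intQ1) (𝒳 a (k + 1)) := by
  refine maximizers_subset_image M2_mulVec_injective (M2_image_X_subset a _) ?_
    fun c ⟨hc0, hc1⟩ _ hp ↦ mem_M2_image_of_isStrictMaxOn ha hc0 (hc1.trans hc0.le) hp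
  rintro c ⟨hc0, -⟩
  by_cases hc : c 0 + c 1 ≤ 0
  · exact Or.inl (by simp [southEast, vecMul_M2, hc0, hc])
  · exact Or.inr (by simp [intQ1, vecMul_M2, hc0, not_le.1 hc])

theorem maximizers_northWest_subset (ha : a ∈ intQ1) (k : ℕ) :
    maximizers northWest (𝒳 a (k + 2)) ⊆
      M1.mulVec '' maximizers (southEast ∪ southWest) (𝒳 a (k + 1)) := by
  refine maximizers_subset_image M1_mulVec_involutive.injective (M1_image_X_subset a _) ?_
    fun c hc _ hp ↦ mem_M1_image_of_isStrictMaxOn ha hc hp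
  rintro c ⟨hc0, hc1, hc | hc⟩
  · rcases hc1.lt_or_eq with hc1 | hc1
    · exact Or.inl (by simp [southEast, vecMul_M1, hc1, hc0])
    · exact Or.inr (by simp [southWest, vecMul_M1, ← hc1, hc])
  · exact Or.inl (by simp [southEast, vecMul_M1, hc, hc0])

def floorPoints (a : Fin 2 → ℝ) : Set (Fin 2 → ℝ) := {a, M2 *ᵥ (M1 *ᵥ a), M1 *ᵥ (M2 *ᵥ a)}

theorem exists_floorPoints_M1_le_M2 (ha : a ∈ intQ1) {y : Fin 2 → ℝ} (hy : y ∈ floorPoints a) :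
    ∃ z ∈ floorPoints a, M1 *ᵥ z ≤ M2 *ᵥ y := by
  obtain ⟨ha0, ha1⟩ := ha
  rcases hy with rfl | rfl | rfl
  · exact ⟨M1 *ᵥ (M2 *ᵥ y), by simp [floorPoints], (M1_mulVec_involutive _).le⟩
  all_goals
    refine ⟨a, mem_insert _ _, le_iff_fin_two.2 ?_⟩
    simp only [M1_mulVec, M2_mulVec, cons_val_zero, cons_val_one]
    constructor <;> linarith

theorem exists_floorPoints_le_M2_M1 (ha : a ∈ intQ1) {y : Fin 2 → ℝ} (hy : y ∈ floorPoints a) :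
    ∃ z ∈ floorPoints a, z ≤ M2 *ᵥ (M1 *ᵥ y) := by
  obtain ⟨ha0, ha1⟩ := ha
  rcases hy with rfl | rfl | rfl
  · exact ⟨M2 *ᵥ (M1 *ᵥ y), by simp [floorPoints], le_rfl⟩
  all_goals
    refine ⟨a, mem_insert _ _, le_iff_fin_two.2 ?_⟩
    simp only [M1_mulVec, M2_mulVec, cons_val_zero, cons_val_one]
    constructor <;> linarith

theorem exists_floorPoints_iterate_le (ha : a ∈ intQ1) (k : ℕ) (hp : p ∈ 𝒳 a k) :
    ∃ y ∈ floorPoints a, M1.mulVec^[k] y ≤ p := by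
  induction k generalizing p with
  | zero => exact ⟨a, mem_insert _ _, (mem_singleton_iff.1 hp).ge⟩
  | succ k ih =>
    rw [X_succ] at hp
    rcases hp with ⟨q, hq, rfl⟩ | ⟨q, hq, rfl⟩ <;> obtain ⟨y, hy, hyq⟩ := ih hq
    · exact ⟨y, hy, by rw [Function.iterate_succ_apply']; exact monotone_M1_mulVec hyq⟩
    · rcases Nat.even_or_odd k with hk | hk
      · obtain ⟨z, hz, hzy⟩ := exists_floorPoints_M1_le_M2 ha hy
        rw [M1_mulVec_involutive.iterate_even hk] at hyq
        rw [M1_mulVec_involutive.iterate_odd hk.add_one]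
        exact ⟨z, hz, hzy.trans (monotone_M2_mulVec hyq)⟩
      · obtain ⟨z, hz, hzy⟩ := exists_floorPoints_le_M2_M1 ha hy
        rw [M1_mulVec_involutive.iterate_odd hk] at hyq
        rw [M1_mulVec_involutive.iterate_even hk.add_one]
        exact ⟨z, hz, hzy.trans (monotone_M2_mulVec hyq)⟩

theorem iterate_mem_X_of_mem_floorPoints {y : Fin 2 → ℝ} (hy : y ∈ floorPoints a) (hk : 2 ≤ k) :
    M1.mulVec^[k] y ∈ 𝒳 a k := by
  induction k, hk using Nat.le_induction with
  | base =>
    rw [M1_mulVec_involutive.iterate_even even_two]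
    rcases hy with rfl | rfl | rfl
    · exact mem_X_add_two (mem_singleton y)
    · exact M2_mulVec_mem_X (M1_mulVec_mem_X (mem_singleton a))
    · exact M1_mulVec_mem_X (M2_mulVec_mem_X (mem_singleton a))
  | succ k _ ih =>
    rw [Function.iterate_succ_apply']
    exact M1_mulVec_mem_X ih

theorem maximizers_southWest_subset (ha : a ∈ intQ1) (hk : 2 ≤ k) :
    maximizers southWest (𝒳 a k) ⊆ M1.mulVec^[k] '' floorPoints a := by
  rintro p ⟨c, ⟨hc0, hc1⟩, hp⟩
  obtain ⟨y, hy, hyp⟩ := exists_floorPoints_iterate_le ha k hp.1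
  have hc : 0 ≤ -c := le_iff_fin_two.2 ⟨neg_nonneg.2 hc0, neg_nonneg.2 hc1.le⟩
  refine ⟨y, hy, hp.eq_of_le (iterate_mem_X_of_mem_floorPoints hy hk) ?_⟩
  simpa only [neg_dotProduct, neg_le_neg_iff] using dotProduct_le_dotProduct_of_nonneg_left hyp hc

theorem X_nonempty (a : Fin 2 → ℝ) (k : ℕ) : (𝒳 a k).Nonempty := by
  induction k with
  | zero => exact singleton_nonempty a
  | succ k ih => exact ih.image _ |>.mono (M1_image_X_subset a k)

theorem X_nontrivial (ha : a ∈ intQ1) (k : ℕ) : (𝒳 a (k + 1)).Nontrivial := by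
  obtain ⟨q, hq⟩ := X_nonempty a k
  obtain ⟨hq0, -⟩ := X_subset_intQ1 ha k hq
  refine ⟨_, M1_mulVec_mem_X hq, _, M2_mulVec_mem_X hq, fun h ↦ ?_⟩
  have h0 := congrFun h 0
  simp only [M1_mulVec, M2_mulVec, cons_val_zero] at h0
  linarith

theorem maximizers_X_finite (D : Set (Fin 2 → ℝ)) (a : Fin 2 → ℝ) (k : ℕ) :
    (maximizers D (𝒳 a k)).Finite :=
  (X_finite a k).subset maximizers_subset

theorem ncard_maximizers_X_one_le (D : Set (Fin 2 → ℝ)) (a : Fin 2 → ℝ) :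
    (maximizers D (𝒳 a 1)).ncard ≤ 2 :=
  (ncard_le_ncard maximizers_subset (X_finite a 1)).trans (ncard_XSeq_pair_le M1 M2 a 1)

theorem ncard_maximizers_intQ1_le (ha : a ∈ intQ1) (k : ℕ) :
    (maximizers intQ1 (𝒳 a (k + 1))).ncard ≤ 2 * (k + 1) := by
  induction k with
  | zero => exact ncard_maximizers_X_one_le _ a
  | succ k ih =>
    have hsteep := maximizers_X_finite steep a (k + 1)
    have hflat := maximizers_X_finite flat a (k + 1)
    have hinter : (maximizers steep (𝒳 a (k + 1)) ∩ maximizers flat (𝒳 a (k + 1))).ncard ≤ 1 :=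
      (ncard_le_one (hsteep.inter_of_left _)).2 (subsingleton_maximizers_steep_inter_flat _)
    have hunion : (maximizers steep (𝒳 a (k + 1)) ∪ maximizers flat (𝒳 a (k + 1))).ncard ≤
        (maximizers intQ1 (𝒳 a (k + 1))).ncard :=
      ncard_le_ncard (union_subset (maximizers_mono steep_subset_intQ1)
        (maximizers_mono flat_subset_intQ1)) (maximizers_X_finite _ a _)
    calc (maximizers intQ1 (𝒳 a (k + 1 + 1))).ncard
        ≤ (maximizers steep (𝒳 a (k + 1))).ncard + (maximizers flat (𝒳 a (k + 1))).ncard :=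
          ncard_le_add_of_subset_image_union hsteep hflat (maximizers_intQ1_subset ha k)
      _ = (maximizers steep (𝒳 a (k + 1)) ∪ maximizers flat (𝒳 a (k + 1))).ncard +
          (maximizers steep (𝒳 a (k + 1)) ∩ maximizers flat (𝒳 a (k + 1))).ncard :=
          (ncard_union_add_ncard_inter _ _ hsteep hflat).symm
      _ ≤ 2 * (k + 1 + 1) := by omega

theorem ncard_maximizers_southEast_le (ha : a ∈ intQ1) (k : ℕ) :
    (maximizers southEast (𝒳 a (k + 1))).ncard ≤ 2 * (k + 1) ^ 2 := by
  induction k with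
  | zero => exact ncard_maximizers_X_one_le _ a
  | succ k ih =>
    calc (maximizers southEast (𝒳 a (k + 1 + 1))).ncard
        ≤ (maximizers southEast (𝒳 a (k + 1))).ncard + (maximizers intQ1 (𝒳 a (k + 1))).ncard :=
          ncard_le_add_of_subset_image_union (maximizers_X_finite _ a _)
            (maximizers_X_finite _ a _)
            ((maximizers_southEast_subset ha k).trans_eq (by rw [maximizers_union, image_union]))
      _ ≤ 2 * (k + 1) ^ 2 + 2 * (k + 1) := add_le_add ih (ncard_maximizers_intQ1_le ha k)
      _ ≤ 2 * (k + 1 + 1) ^ 2 := by nlinarith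

theorem floorPoints_finite (a : Fin 2 → ℝ) : (floorPoints a).Finite :=
  toFinite {a, M2 *ᵥ (M1 *ᵥ a), M1 *ᵥ (M2 *ᵥ a)}

theorem ncard_floorPoints_le (a : Fin 2 → ℝ) : (floorPoints a).ncard ≤ 3 :=
  (ncard_insert_le _ _).trans (Nat.succ_le_succ ((ncard_insert_le _ _).trans (by simp)))

theorem ncard_maximizers_southWest_le (ha : a ∈ intQ1) (hk : 2 ≤ k) :
    (maximizers southWest (𝒳 a k)).ncard ≤ 3 :=
  (ncard_le_ncard (maximizers_southWest_subset ha hk) ((floorPoints_finite a).image _)).trans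
    ((ncard_image_le (floorPoints_finite a)).trans (ncard_floorPoints_le a))

theorem ncard_maximizers_northWest_le (ha : a ∈ intQ1) (hk : 2 ≤ k) :
    (maximizers northWest (𝒳 a (k + 1))).ncard ≤ 2 * k ^ 2 + 3 := by
  obtain ⟨j, rfl⟩ : ∃ j, k = j + 1 := ⟨k - 1, by omega⟩
  calc (maximizers northWest (𝒳 a (j + 1 + 1))).ncard
      ≤ (maximizers southEast (𝒳 a (j + 1))).ncard + (maximizers southWest (𝒳 a (j + 1))).ncard :=
        ncard_le_add_of_subset_image_union (maximizers_X_finite _ a _) (maximizers_X_finite _ a _)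
          ((maximizers_northWest_subset ha j).trans_eq (by rw [maximizers_union, image_union]))
    _ ≤ 2 * (j + 1) ^ 2 + 3 :=
        add_le_add (ncard_maximizers_southEast_le ha j) (ncard_maximizers_southWest_le ha hk)

theorem NExt_le_sum_ncard_maximizers (ha : a ∈ intQ1) (k : ℕ) :
    NExt {M1, M2} a (k + 1) ≤ (maximizers intQ1 (𝒳 a (k + 1))).ncard +
      (maximizers southEast (𝒳 a (k + 1))).ncard + (maximizers southWest (𝒳 a (k + 1))).ncard +
      (maximizers northWest (𝒳 a (k + 1))).ncard := by
  have hcover : EPts {M1, M2} a (k + 1) ⊆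
      maximizers (intQ1 ∪ southEast ∪ southWest ∪ northWest) (𝒳 a (k + 1)) :=
    (extremePoints_convexHull_subset_maximizers (X_finite a _) (X_nontrivial ha k)).trans
      (maximizers_mono ne_zero_subset_cones)
  simp only [maximizers_union] at hcover
  refine (ncard_le_ncard hcover ((X_finite a (k + 1)).subset <| union_subset
    (union_subset (union_subset maximizers_subset maximizers_subset) maximizers_subset)
    maximizers_subset)).trans ?_
  exact (ncard_union_le _ _).trans (Nat.add_le_add_right
    ((ncard_union_le _ _).trans (Nat.add_le_add_right (ncard_union_le _ _) _)) _)

theorem NExt_le_of_mem_intQ1 (ha : a ∈ intQ1) (hk : 2 ≤ k) :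
    NExt {M1, M2} a (k + 1) ≤ 5 * (k + 1) ^ 2 := by
  have hsum := NExt_le_sum_ncard_maximizers ha k
  have hNE := ncard_maximizers_intQ1_le ha k
  have hSE := ncard_maximizers_southEast_le ha k
  have hSW := ncard_maximizers_southWest_le ha (k := k + 1) (by omega)
  have hNW := ncard_maximizers_northWest_le ha hk
  nlinarith

end SwapShear

/-- `N_k(Σ₁, a) = O(k²)` for `a` in the interior of the first or third quadrant. -/
theorem stmt7 : ∃ α : ℝ, 0 < α ∧ ∃ k₀ : ℕ, ∀ a : Fin 2 → ℝ,
    a ∈ intQ1 ∪ intQ3 → ∀ k : ℕ, k₀ ≤ k →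
      (NExt {M1, M2} a k : ℝ) ≤ α * (k : ℝ) ^ 2 := by
  refine ⟨5, by norm_num, 3, fun a ha k hk ↦ ?_⟩
  obtain ⟨k, rfl⟩ : ∃ j, k = j + 1 := ⟨k - 1, by omega⟩
  have hbound : NExt {M1, M2} a (k + 1) ≤ 5 * (k + 1) ^ 2 := by
    rcases ha with ha | ⟨ha0, ha1⟩
    · exact NExt_le_of_mem_intQ1 ha (by omega)
    · calc NExt {M1, M2} a (k + 1) = NExt {M1, M2} ((-1 : ℝ) • -a) (k + 1) := by
            rw [neg_one_smul, neg_neg]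
        _ = NExt {M1, M2} (-a) (k + 1) := NExt_smul _ (by norm_num) _ _
        _ ≤ 5 * (k + 1) ^ 2 := NExt_le_of_mem_intQ1 ⟨neg_pos.2 ha0, neg_pos.2 ha1⟩ (by omega)
  exact_mod_cast hbound
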